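/- arXiv:2211.01417 — 3 statements merged into one kernel-verified Lean document; each statement's English description precedes it below -/
import Mathlib

section
/- Suppose A₁, …, Aₖ are arithmetic progressions in ℤ with moduli d₁, …, dₖ respectively, whose union is ℤ, and suppose all dᵢ are pairwise distinct squarefree integers that divide a common squarefree integer m. Then there exist hyperplanes H₁, …, Hₖ in the product ∏_{p ∣ m} ℤ/pℤ (over the prime divisors of m), pairwise non-parallel, whose union is the whole product. -/
open Finset

attribute [local instance] Classical.propDecidable

/-- A hyperplane in a product `∀ i, S i`: each coordinate factor is either
the full set or a singleton. -/
structure Hyperplane {ι : Type*} (S : ι → Type*) where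
  Y : ∀ i, Set (S i)
  full_or_singleton : ∀ i, Y i = Set.univ ∨ ∃ a, Y i = {a}

namespace Hyperplane

variable {ι : Type*} {S : ι → Type*}

/-- The set of points of the hyperplane. -/
def toSet (A : Hyperplane S) : Set (∀ i, S i) := {x | ∀ i, x i ∈ A.Y i}

/-- The set of fixed coordinates. -/
def fixedSet (A : Hyperplane S) : Set ι := {i | A.Y i ≠ Set.univ}

/-- The fixed coordinates as a `Finset`. -/
noncomputable def fixedFinset [Fintype ι] (A : Hyperplane S) : Finset ι :=
  Finset.univ.filter fun i => A.Y i ≠ Set.univ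

end Hyperplane

private lemma exists_int_cast (m : ℕ)     (x : ∀ p : m.primeFactors, ZMod (p : ℕ)) :
    ∃ n : ℤ, ∀ p : m.primeFactors, (n : ZMod (p : ℕ)) = x p := by
  have coprime : Pairwise (Function.onFun Nat.Coprime fun p : m.primeFactors => (p : ℕ)) := by
    intro p q hpq
    exact (Nat.coprime_primes (Nat.prime_of_mem_primeFactors p.2)
      (Nat.prime_of_mem_primeFactors q.2)).mpr (fun h => hpq (Subtype.ext h))
  let e := ZMod.prodEquivPi (fun p : m.primeFactors => (p : ℕ)) coprime
  set N := ∏ p : m.primeFactors, (p : ℕ) with hN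
  haveI : NeZero N := ⟨by
    rw [hN]
    exact Nat.pos_iff_ne_zero.mp (Finset.prod_pos (fun p _ => (Nat.prime_of_mem_primeFactors p.2).pos))⟩
  refine ⟨((e.symm x).val : ℤ), ?_⟩
  intro p
  have : e (((e.symm x).val : ℤ) : ZMod N) = fun q : m.primeFactors => (((e.symm x).val : ℤ) : ZMod (q : ℕ)) := by
    ext q
    rw [map_intCast]
    simp [Pi.intCast_apply]
  have h2 : (((e.symm x).val : ℤ) : ZMod N) = e.symm x := by
    simp [ZMod.natCast_val, ZMod.cast_id]
  rw [h2] at this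
  rw [e.apply_symm_apply] at this
  exact (congrFun this p).symm


/-- A covering system with distinct squarefree moduli dividing a common squarefree `m`
yields pairwise non-parallel hyperplanes covering `∏_{p ∣ m} ℤ/pℤ`. -/
theorem cover_to_hyperplane_cover (k : ℕ) (a : Fin k → ℤ) (d : Fin k → ℕ) (m : ℕ)
    (hm : Squarefree m) (hdvd : ∀ i, d i ∣ m) (hd1 : ∀ i, 1 < d i)
    (hinj : Function.Injective d) (hsf : ∀ i, Squarefree (d i))
    (hcover : (⋃ i, {x : ℤ | (d i : ℤ) ∣ x - a i}) = Set.univ) :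
    ∃ H : Fin k → Hyperplane (fun p : m.primeFactors => ZMod (p : ℕ)),
      (∀ i₁ i₂ : Fin k, i₁ ≠ i₂ → (H i₁).fixedSet ≠ (H i₂).fixedSet) ∧
      (⋃ i, (H i).toSet) = Set.univ := by
  refine ⟨fun i => ⟨fun p => if (p : ℕ) ∣ d i then {((a i : ZMod (p : ℕ)))} else Set.univ,
      fun p => by by_cases h : (p : ℕ) ∣ d i <;> simp [h]⟩, ?_, ?_⟩
  · -- distinct fixed sets
    intro i₁ i₂ hne heq
    apply hne
    apply hinj
    have hfix : ∀ i : Fin k, (Hyperplane.fixedSet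
        ⟨fun p : m.primeFactors => if (p : ℕ) ∣ d i then {((a i : ZMod (p : ℕ)))} else Set.univ,
          fun p => by by_cases h : (p : ℕ) ∣ d i <;> simp [h]⟩ : Set m.primeFactors)
        = {p : m.primeFactors | (p : ℕ) ∣ d i} := by
      intro i
      ext p
      haveI : Fact (Nat.Prime (p : ℕ)) := ⟨Nat.prime_of_mem_primeFactors p.2⟩
      simp only [Hyperplane.fixedSet, Set.mem_setOf_eq]
      by_cases h : (p : ℕ) ∣ d i
      · simp only [h, if_true, iff_true]
        intro hcon
        obtain ⟨b, hb⟩ := exists_ne ((a i : ZMod (p : ℕ)))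
        have : b ∈ ({((a i : ZMod (p : ℕ)))} : Set (ZMod (p : ℕ))) := hcon ▸ Set.mem_univ b
        exact hb this
      · simp [h]
    rw [hfix i₁, hfix i₂] at heq
    have hpf : (d i₁).primeFactors = (d i₂).primeFactors := by
      ext q
      by_cases hq : q ∈ m.primeFactors
      · have := Set.ext_iff.mp heq ⟨q, hq⟩
        simp only [Set.mem_setOf_eq] at this
        simp only [Nat.mem_primeFactors]
        constructor
        · intro ⟨h1, h2, _⟩
          exact ⟨h1, this.mp h2, (hd1 i₂).ne_bot⟩
        · intro ⟨h1, h2, _⟩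
          exact ⟨h1, this.mpr h2, (hd1 i₁).ne_bot⟩
      · constructor <;> intro hmem <;> exact absurd
          (Nat.mem_primeFactors.mpr ⟨(Nat.prime_of_mem_primeFactors hmem),
            (Nat.dvd_of_mem_primeFactors hmem).trans (hdvd _), hm.ne_zero⟩) hq
    calc d i₁ = ∏ p ∈ (d i₁).primeFactors, p :=
          (Nat.prod_primeFactors_of_squarefree (hsf i₁)).symm
      _ = ∏ p ∈ (d i₂).primeFactors, p := by rw [hpf]
      _ = d i₂ := Nat.prod_primeFactors_of_squarefree (hsf i₂)
  · -- covering
    ext x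
    simp only [Set.mem_iUnion, Set.mem_univ, iff_true]
    obtain ⟨n, hn⟩ := exists_int_cast m x
    have : n ∈ (⋃ i, {x : ℤ | (d i : ℤ) ∣ x - a i}) := hcover ▸ Set.mem_univ n
    obtain ⟨i, hi⟩ := Set.mem_iUnion.mp this
    refine ⟨i, fun p => ?_⟩
    by_cases h : (p : ℕ) ∣ d i
    · simp only [h, if_true, Set.mem_singleton_iff]
      have hdvd' : ((p : ℕ) : ℤ) ∣ n - a i := (Int.natCast_dvd_natCast.mpr h).trans hi
      have : ((n - a i : ℤ) : ZMod (p : ℕ)) = 0 :=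
        (ZMod.intCast_zmod_eq_zero_iff_dvd _ _).mpr hdvd'
      rw [← hn p]
      push_cast at this
      linear_combination this
    · simp [h]
end

section
/- Let Q = S₁ × ⋯ × Sₙ be a product of finite sets with |Sₖ| ≥ 2 for each k, and suppose for each k that Bₖ ⊆ S₁ × ⋯ × Sₖ. Define probability measures P₀, P₁, …, Pₙ as in the distortion method with parameter δ ∈ (0, 1/2]: P₀ is uniform, and Pₖ(x,y) for x ∈ Q_{k-1}, y ∈ Sₖ equals max{0, (αₖ(x)−δ)/(αₖ(x)(1−δ))}·P_{k-1}(x)/|Sₖ| if (x,y) ∈ Bₖ, and min{1/(1−αₖ(x)), 1/(1−δ)}·P_{k-1}(x)/|Sₖ| otherwise, where αₖ(x) is the fraction of y ∈ Sₖ with (x,y) ∈ Bₖ. Then each Pₖ is a probability measure: Pₖ is nonnegative and ∑_{y ∈ Sₖ} Pₖ(x,y) = P_{k-1}(x) for every x ∈ Q_{k-1}. -/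
open Finset

attribute [local instance] Classical.propDecidable

section Distortion

variable {n : ℕ} {S : Fin n → Type*}

/-- The proportion of the fibre through `x` in direction `k` covered by `B`. -/
noncomputable def alpha [∀ i, Fintype (S i)] (B : Set (∀ i, S i)) (k : Fin n)
    (x : ∀ i, S i) : ℝ :=
  (Finset.univ.filter fun y : S k => Function.update x k y ∈ B).card / Fintype.card (S k)

/-- The distorted point masses `P_k` of the distortion method, as densities on the
full product: `P 0` is uniform, and `P (k+1)` reweights `P k` on each fibre in
direction `k` according to the covered set `B k`. -/
noncomputable def distP [∀ i, Fintype (S i)] (B : Fin n → Set (∀ i, S i)) (δ : ℝ) :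
    ℕ → (∀ i, S i) → ℝ
  | 0, _ => 1 / Fintype.card (∀ i, S i)
  | (k + 1), x =>
    (if h : k < n then
      (if x ∈ B ⟨k, h⟩ then
        max 0 ((alpha (B ⟨k, h⟩) ⟨k, h⟩ x - δ) / (alpha (B ⟨k, h⟩) ⟨k, h⟩ x * (1 - δ)))
      else
        min (1 / (1 - alpha (B ⟨k, h⟩) ⟨k, h⟩ x)) (1 / (1 - δ)))
     else 1) * distP B δ k x

/-- The `P_k`-measure of a subset of the product. -/
noncomputable def distPMeas [∀ i, Fintype (S i)] (B : Fin n → Set (∀ i, S i)) (δ : ℝ)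
    (k : ℕ) (X : Set (∀ i, S i)) : ℝ :=
  ∑ z : ∀ i, S i, if z ∈ X then distP B δ k z else 0

/-- `X` depends only on the coordinates `i` with `i < m`. -/
def DependsOnBelow (X : Set (∀ i, S i)) (m : ℕ) : Prop :=
  ∀ x y : ∀ i, S i, (∀ i : Fin n, (i : ℕ) < m → x i = y i) → x ∈ X → y ∈ X

/-- `B_k`: the union of the hyperplanes of `𝒜` whose largest fixed coordinate is `k`. -/
noncomputable def coverSet [∀ i, Fintype (S i)] (𝒜 : Finset (Hyperplane S)) (k : Fin n) :
    Set (∀ i, S i) :=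
  {x | ∃ A ∈ 𝒜, A.fixedFinset.max = (k : WithBot (Fin n)) ∧ x ∈ A.toSet}

/-- `A^{[m]}`: the hyperplane obtained from `A` by replacing the factors with
index `≥ m` by the full sets. -/
def projSet (A : Hyperplane S) (m : ℕ) : Set (∀ i, S i) :=
  {x | ∀ i : Fin n, (i : ℕ) < m → x i ∈ A.Y i}

end Distortion

section Aux

variable {n : ℕ} {S : Fin n → Type*} [∀ i, Fintype (S i)]

lemma alpha_nonneg (B : Set (∀ i, S i)) (k : Fin n) (x : ∀ i, S i) :
    0 ≤ alpha B k x :=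
  div_nonneg (Nat.cast_nonneg _) (Nat.cast_nonneg _)

lemma alpha_le_one (B : Set (∀ i, S i)) (k : Fin n) (x : ∀ i, S i) :
    alpha B k x ≤ 1 := by
  apply div_le_one_of_le₀
  · exact_mod_cast Finset.card_filter_le _ _
  · exact Nat.cast_nonneg _

lemma distP_nonneg {B : Fin n → Set (∀ i, S i)} {δ : ℝ} (hδ1 : δ ≤ 1 / 2) :
    ∀ (k : ℕ) (z : ∀ i, S i), 0 ≤ distP B δ k z := by
  intro k
  induction k with
  | zero => intro z; exact div_nonneg zero_le_one (Nat.cast_nonneg _)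
  | succ k ih =>
    intro z
    rw [distP]
    refine mul_nonneg ?_ (ih z)
    by_cases h : k < n
    · rw [dif_pos h]
      split_ifs
      · exact le_max_left _ _
      · refine le_min ?_ ?_
        · rw [one_div_nonneg]
          have := alpha_le_one (B ⟨k, h⟩) ⟨k, h⟩ z
          linarith
        · rw [one_div_nonneg]; linarith
    · rw [dif_neg h]; exact zero_le_one

lemma distP_agree {B : Fin n → Set (∀ i, S i)} {δ : ℝ}
    (hB : ∀ k : Fin n, DependsOnBelow (B k) ((k : ℕ) + 1)) :
    ∀ (k : ℕ) (x y : ∀ i, S i), (∀ i : Fin n, (i : ℕ) < k → x i = y i) →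
      distP B δ k x = distP B δ k y := by
  intro k
  induction k with
  | zero => intro x y _; rfl
  | succ k ih =>
    intro x y hxy
    by_cases h : k < n
    · have hmem : x ∈ B ⟨k, h⟩ ↔ y ∈ B ⟨k, h⟩ :=
        ⟨fun hx => hB ⟨k, h⟩ x y hxy hx,
         fun hy => hB ⟨k, h⟩ y x (fun i hi => (hxy i hi).symm) hy⟩
      have halpha : alpha (B ⟨k, h⟩) ⟨k, h⟩ x = alpha (B ⟨k, h⟩) ⟨k, h⟩ y := by
        have hfilter : (Finset.univ.filter fun z : S ⟨k, h⟩ =>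
              Function.update x ⟨k, h⟩ z ∈ B ⟨k, h⟩)
            = Finset.univ.filter fun z : S ⟨k, h⟩ =>
              Function.update y ⟨k, h⟩ z ∈ B ⟨k, h⟩ := by
          apply Finset.filter_congr
          intro z _
          have hag : ∀ w w' : ∀ i, S i, (∀ i : Fin n, (i : ℕ) < k + 1 → w i = w' i) →
              ∀ i : Fin n, (i : ℕ) < k + 1 →
              Function.update w ⟨k, h⟩ z i = Function.update w' ⟨k, h⟩ z i := by
            intro w w' hww i hi
            by_cases hik : i = ⟨k, h⟩
            · subst hik; simp
            · rw [Function.update_of_ne hik, Function.update_of_ne hik, hww i hi]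
          constructor
          · exact fun hz => hB ⟨k, h⟩ _ _ (hag x y hxy) hz
          · exact fun hz => hB ⟨k, h⟩ _ _ (hag y x (fun i hi => (hxy i hi).symm)) hz
        unfold alpha
        rw [hfilter]
      have hP : distP B δ k x = distP B δ k y :=
        ih x y (fun i hi => hxy i (hi.trans (Nat.lt_succ_self k)))
      rw [distP, distP, dif_pos h, dif_pos h, halpha, hP]
      by_cases hx : x ∈ B ⟨k, h⟩
      · rw [if_pos hx, if_pos (hmem.mp hx)]
      · rw [if_neg hx, if_neg (fun hy => hx (hmem.mpr hy))]
    · have hP : distP B δ k x = distP B δ k y :=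
        ih x y (fun i hi => hxy i (hi.trans (Nat.lt_succ_self k)))
      rw [distP, distP, dif_neg h, dif_neg h, hP]


lemma distortion_sum (δ M Nr : ℝ) (hδ0 : 0 < δ) (hδ1 : δ ≤ 1 / 2) (hN : 0 < Nr)
    (hM0 : 0 ≤ M) (hMN : M ≤ Nr) :
    M * max 0 ((M / Nr - δ) / (M / Nr * (1 - δ))) +
      (Nr - M) * min (1 / (1 - M / Nr)) (1 / (1 - δ)) = Nr := by
  have hδ' : (0:ℝ) < 1 - δ := by linarith
  have hNne : Nr ≠ 0 := ne_of_gt hN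
  have hα0 : 0 ≤ M / Nr := div_nonneg hM0 hN.le
  have hα1 : M / Nr ≤ 1 := (div_le_one hN).mpr hMN
  by_cases hc : M / Nr ≤ δ
  · rw [max_eq_left (div_nonpos_of_nonpos_of_nonneg (by linarith)
      (mul_nonneg hα0 hδ'.le))]
    rw [min_eq_left (one_div_le_one_div_of_le hδ' (by linarith))]
    have hlt : M / Nr < 1 := lt_of_le_of_lt hc (by linarith)
    have hMlt : M < Nr := (div_lt_one hN).mp hlt
    have hne : 1 - M / Nr ≠ 0 := sub_ne_zero_of_ne (ne_of_lt hlt).symm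
    rw [mul_zero, zero_add, one_div]
    rw [mul_inv_eq_iff_eq_mul₀ hne]
    field_simp
  · push_neg at hc
    have hαpos : 0 < M / Nr := lt_trans hδ0 hc
    have hMpos : 0 < M := by
      have := mul_pos hαpos hN
      rwa [div_mul_cancel₀ _ hNne] at this
    rw [max_eq_right (div_nonneg (by linarith) (mul_nonneg hα0 hδ'.le))]
    by_cases h1 : M = Nr
    · rw [h1, div_self hNne, one_mul, div_self (ne_of_gt hδ'), mul_one, sub_self,
        zero_mul, add_zero]
    · have hMlt : M < Nr := lt_of_le_of_ne hMN h1
      have hlt : M / Nr < 1 := (div_lt_one hN).mpr hMlt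
      rw [min_eq_right (one_div_le_one_div_of_le (by linarith) (by linarith))]
      have hMne : M ≠ 0 := ne_of_gt hMpos
      field_simp
      ring

end Aux

/-- The distorted measures are probability measures: each `P_k` is nonnegative, and the
distortion step preserves the total mass of each fibre `{x} × S_k`. -/
theorem distP_prob {n : ℕ} {S : Fin n → Type*} [∀ i, Fintype (S i)]
    (hS : ∀ i, 2 ≤ Fintype.card (S i)) (δ : ℝ) (hδ0 : 0 < δ) (hδ1 : δ ≤ 1 / 2)
    (B : Fin n → Set (∀ i, S i)) (hB : ∀ k : Fin n, DependsOnBelow (B k) ((k : ℕ) + 1)) :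
    (∀ k : ℕ, k ≤ n → ∀ z : ∀ i, S i, 0 ≤ distP B δ k z) ∧
    ∀ (k : Fin n) (x : ∀ i, S i),
      ∑ y : S k, distP B δ ((k : ℕ) + 1) (Function.update x k y)
        = ∑ y : S k, distP B δ (k : ℕ) (Function.update x k y) := by
  constructor
  · intro k _ z
    exact distP_nonneg hδ1 k z
  · intro k x
    have hkn : (k : ℕ) < n := k.isLt
    have hconst : ∀ y : S k, distP B δ (k : ℕ) (Function.update x k y) = distP B δ (k : ℕ) x := by
      intro y
      refine distP_agree hB (k : ℕ) _ x (fun i hi => ?_)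
      have hik : i ≠ k := fun he => by subst he; exact lt_irrefl _ hi
      exact Function.update_of_ne hik _ _
    have halphaup : ∀ y : S k, alpha (B k) k (Function.update x k y) = alpha (B k) k x := by
      intro y
      unfold alpha
      simp [Function.update_idem]
    simp only [distP, dif_pos hkn, Fin.eta, hconst, halphaup]
    rw [← Finset.sum_mul, Finset.sum_const, Finset.card_univ, nsmul_eq_mul]
    congr 1
    rw [Finset.sum_ite, Finset.sum_const, Finset.sum_const, nsmul_eq_mul, nsmul_eq_mul]
    set m := (Finset.univ.filter fun y : S k => Function.update x k y ∈ B k).card with hm_def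
    set m' := (Finset.univ.filter fun y : S k => ¬ Function.update x k y ∈ B k).card
      with hm'_def
    set N := Fintype.card (S k) with hN_def
    have hcard : m + m' = N := by
      rw [hm_def, hm'_def, hN_def, Finset.card_filter_add_card_filter_not,
        Finset.card_univ]
    have hNpos : (0:ℝ) < N := by
      have := hS k
      rw [hN_def]
      exact_mod_cast Nat.lt_of_lt_of_le (by norm_num) this
    have hmN : (m : ℝ) ≤ N := by
      exact_mod_cast le_of_add_le_left (le_of_eq hcard)
    have hm' : (m' : ℝ) = (N : ℝ) - m := by
      have : (m : ℝ) + m' = N := by exact_mod_cast hcard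
      linarith
    have hα : alpha (B k) k x = (m : ℝ) / N := rfl
    rw [hα, hm']
    exact distortion_sum δ m N hδ0 hδ1 hNpos (Nat.cast_nonneg m) hmN
end

section
/- Let N ≥ 1 and 0 < ε ≤ 1, and let (sⱼ) be positive reals with sⱼ ≥ 2 for all j ≥ 1 and sⱼ ≥ (3+ε)j for all j ≥ N. Set δ = ε/6. Then for every k ≥ 1, ∏_{j=1}^{k-1} (1 + 3/((1−δ)sⱼ)) ≤ 4^N · k^{1−ε/10}. -/
open Finset

/-- Harmonic tail bound: `∑_{j=2}^{m} 1/j ≤ log m`. -/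
lemma harm_sum_le_log (m : ℕ) :
    ∑ j ∈ Finset.Ico 2 (m + 1), (1 / (j : ℝ)) ≤ Real.log m := by
  induction m with
  | zero => simp
  | succ n ih =>
    rcases Nat.eq_zero_or_pos n with rfl | hn
    · simp
    · rw [Finset.sum_Ico_succ_top (by omega)]
      have h1 : (1 : ℝ) / (n + 1) ≤ Real.log (n + 1) - Real.log n := by
        have hn0 : (0 : ℝ) < n := by exact_mod_cast hn
        have hx : (0 : ℝ) < (n : ℝ) / (n + 1) := by positivity
        have := Real.log_le_sub_one_of_pos hx
        rw [Real.log_div (by positivity) (by positivity)] at this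
        have hne : (n : ℝ) + 1 ≠ 0 := by positivity
        have : Real.log n - Real.log (n + 1) ≤ (n : ℝ) / (n + 1) - 1 := this
        have key : (n : ℝ) / (n + 1) - 1 = -(1 / (n + 1)) := by field_simp; ring
        linarith [this, key ▸ this]
      push_cast
      push_cast at ih
      linarith

/-- Quantitative product bound: if `s j ≥ 2` for all `j ≥ 1` and `s j ≥ (3+ε) j` for
`j ≥ N`, then with `δ = ε/6`, `∏_{j=1}^{k-1} (1 + 3/((1-δ) s j)) ≤ 4^N · k^{1-ε/10}`. -/
theorem prod_distortion_bound (N : ℕ) (ε : ℝ) (hN : 1 ≤ N) (hε0 : 0 < ε) (hε1 : ε ≤ 1)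
    (s : ℕ → ℝ) (hs2 : ∀ j, 1 ≤ j → 2 ≤ s j) (hsN : ∀ j, N ≤ j → (3 + ε) * j ≤ s j)
    (k : ℕ) (hk : 1 ≤ k) :
    ∏ j ∈ Finset.Ico 1 k, (1 + 3 / ((1 - ε / 6) * s j))
      ≤ 4 ^ N * (k : ℝ) ^ (1 - ε / 10) := by
  set t : ℝ := 1 - ε / 10 with ht
  have ht0 : 0 < t := by simp only [ht]; linarith
  have ht1 : t ≤ 1 := by simp only [ht]; linarith
  have hδ : (0:ℝ) < 1 - ε / 6 := by linarith
  set m := min N k with hm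
  have hm1 : 1 ≤ m := le_min hN hk
  -- split the product
  have hsplit : Finset.Ico 1 k = Finset.Ico 1 m ∪ Finset.Ico m k := by
    rw [Finset.Ico_union_Ico_eq_Ico hm1 (min_le_right N k)]
  have hdisj : Disjoint (Finset.Ico 1 m) (Finset.Ico m k) :=
    Finset.Ico_disjoint_Ico_consecutive 1 m k
  rw [hsplit, Finset.prod_union hdisj]
  -- each factor is nonneg, in fact ≥ 1
  have hfac : ∀ j ∈ Finset.Ico 1 k, (0:ℝ) ≤ 1 + 3 / ((1 - ε / 6) * s j) := by
    intro j hj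
    rw [Finset.mem_Ico] at hj
    have := hs2 j hj.1
    have : 0 < (1 - ε / 6) * s j := by nlinarith
    positivity
  -- bound on the first part: each factor ≤ 4
  have h1 : ∏ j ∈ Finset.Ico 1 m, (1 + 3 / ((1 - ε / 6) * s j)) ≤ 4 ^ (m - 1) := by
    have : ∏ j ∈ Finset.Ico 1 m, (1 + 3 / ((1 - ε / 6) * s j))
        ≤ ∏ j ∈ Finset.Ico 1 m, (4:ℝ) := by
      apply Finset.prod_le_prod
      · intro j hj
        exact hfac j (by rw [Finset.mem_Ico] at hj ⊢; omega)
      · intro j hj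
        rw [Finset.mem_Ico] at hj
        have h2 := hs2 j hj.1
        have hpos : (5:ℝ)/3 ≤ (1 - ε / 6) * s j := by nlinarith
        have : 3 / ((1 - ε / 6) * s j) ≤ 3 / ((5:ℝ)/3) :=
          div_le_div_of_nonneg_left (by norm_num) (by norm_num) hpos
        linarith
    rwa [Finset.prod_const, Nat.card_Ico] at this
  -- pointwise bound on the second part
  have h2 : ∏ j ∈ Finset.Ico m k, (1 + 3 / ((1 - ε / 6) * s j))
      ≤ ∏ j ∈ Finset.Ico m k, Real.exp (t / j) := by
    apply Finset.prod_le_prod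
    · intro j hj
      exact hfac j (by rw [Finset.mem_Ico] at hj ⊢; omega)
    · intro j hj
      rw [Finset.mem_Ico] at hj
      have hNj : N ≤ j := by
        rcases le_or_gt N k with h | h
        · have : m = N := min_eq_left h
          omega
        · have : m = k := min_eq_right h.le
          omega
      have hj1 : 1 ≤ j := le_trans hN hNj
      have hjR : (1:ℝ) ≤ j := by exact_mod_cast hj1
      have hsj := hsN j hNj
      have hjpos : (0:ℝ) < j := by linarith
      have hsjpos : (0:ℝ) < s j := by nlinarith
      have key : 3 / ((1 - ε / 6) * s j) ≤ t / j := by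
        rw [div_le_div_iff₀ (by positivity) hjpos]
        -- 3 * j ≤ t * ((1 - ε/6) * s j)
        have h3 : (3:ℝ) ≤ (1 - ε/6) * (3 + ε) * t := by
          simp only [ht]
          nlinarith [mul_nonneg (mul_nonneg hε0.le (sub_nonneg.2 hε1))
            (show (0:ℝ) ≤ 12 - ε by linarith)]
        have h4 : (1 - ε/6) * (3 + ε) * t * j ≤ t * ((1 - ε/6) * s j) := by
          have : (3 + ε) * j ≤ s j := hsj
          nlinarith
        nlinarith
      calc 1 + 3 / ((1 - ε / 6) * s j) ≤ 1 + t / j := by linarith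
        _ ≤ Real.exp (t / j) := by
              have := Real.add_one_le_exp (t / j); linarith
  -- sum bound
  have hsum : ∑ j ∈ Finset.Ico m k, (t / j) ≤ t * (1 + Real.log k) := by
    have hsub : ∑ j ∈ Finset.Ico m k, (t / (j:ℝ)) ≤ ∑ j ∈ Finset.Ico 1 k, (t / (j:ℝ)) := by
      apply Finset.sum_le_sum_of_subset_of_nonneg
      · apply Finset.Ico_subset_Ico (by omega) le_rfl
      · intro j hj _
        rw [Finset.mem_Ico] at hj
        have : (0:ℝ) < j := by exact_mod_cast hj.1
        positivity
    have hharm : ∑ j ∈ Finset.Ico 1 k, (1 / (j:ℝ)) ≤ 1 + Real.log k := by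
      obtain ⟨p, rfl⟩ : ∃ p, k = p + 1 := ⟨k - 1, by omega⟩
      rcases Nat.eq_zero_or_pos p with rfl | hp
      · simp [Real.log_nonneg]
      · have hh := harm_sum_le_log p
        have hsplit2 : Finset.Ico 1 (p + 1) = {1} ∪ Finset.Ico 2 (p + 1) := by
          rw [show ({1} : Finset ℕ) = Finset.Ico 1 2 by rfl,
            Finset.Ico_union_Ico_eq_Ico (by omega) (by omega)]
        rw [hsplit2, Finset.sum_union (by
          rw [show ({1} : Finset ℕ) = Finset.Ico 1 2 by rfl]
          exact Finset.Ico_disjoint_Ico_consecutive 1 2 (p + 1))]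
        simp only [Finset.sum_singleton, Nat.cast_one]
        have hlog : Real.log p ≤ Real.log (p + 1 : ℕ) := by
          apply Real.log_le_log (by exact_mod_cast hp) (by push_cast; linarith)
        linarith
    calc ∑ j ∈ Finset.Ico m k, (t / (j:ℝ)) ≤ ∑ j ∈ Finset.Ico 1 k, (t / (j:ℝ)) := hsub
      _ = t * ∑ j ∈ Finset.Ico 1 k, (1 / (j:ℝ)) := by
          rw [Finset.mul_sum]; apply Finset.sum_congr rfl; intro j _; ring
      _ ≤ t * (1 + Real.log k) := by
          apply mul_le_mul_of_nonneg_left hharm ht0.le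
  -- combine
  have h2' : ∏ j ∈ Finset.Ico m k, Real.exp (t / j) ≤ Real.exp (t * (1 + Real.log k)) := by
    rw [← Real.exp_sum]
    exact Real.exp_le_exp.mpr hsum
  have hkpos : (0:ℝ) < k := by exact_mod_cast hk
  have hrpow : Real.exp (t * (1 + Real.log k)) = Real.exp t * (k:ℝ) ^ t := by
    rw [Real.rpow_def_of_pos hkpos, ← Real.exp_add]
    ring_nf
  have hexp : Real.exp t ≤ 4 := by
    calc Real.exp t ≤ Real.exp 1 := Real.exp_le_exp.mpr ht1
      _ ≤ 4 := by
          have := Real.exp_one_lt_d9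
          linarith
  have hprod1nn : (0:ℝ) ≤ ∏ j ∈ Finset.Ico 1 m, (1 + 3 / ((1 - ε / 6) * s j)) :=
    Finset.prod_nonneg fun j hj => hfac j (by rw [Finset.mem_Ico] at hj ⊢; omega)
  have hkt : (0:ℝ) ≤ (k:ℝ) ^ t := (Real.rpow_pos_of_pos hkpos t).le
  calc (∏ j ∈ Finset.Ico 1 m, (1 + 3 / ((1 - ε / 6) * s j))) *
        ∏ j ∈ Finset.Ico m k, (1 + 3 / ((1 - ε / 6) * s j))
      ≤ 4 ^ (m - 1) * (Real.exp t * (k:ℝ) ^ t) := by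
        apply mul_le_mul h1 (h2.trans (h2'.trans_eq hrpow))
          (Finset.prod_nonneg fun j hj => hfac j (by rw [Finset.mem_Ico] at hj ⊢; omega))
          (by positivity)
    _ ≤ 4 ^ (m - 1) * (4 * (k:ℝ) ^ t) := by
        apply mul_le_mul_of_nonneg_left (mul_le_mul_of_nonneg_right hexp hkt) (by positivity)
    _ = 4 ^ (m - 1 + 1) * (k:ℝ) ^ t := by rw [pow_succ]; ring
    _ ≤ 4 ^ N * (k:ℝ) ^ t := by
        apply mul_le_mul_of_nonneg_right _ hkt
        apply pow_le_pow_right₀ (by norm_num)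
        omega
end
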